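/- arXiv:1907.00848 — 2 statements merged into one kernel-verified Lean document; each statement's English description precedes it below -/
import Mathlib

section
/- For every L > 0, every s ≥ 0 and all k, n ∈ ℕ: ∫_{C_n(L) + s + k} (r^k/k!) e^{-r} dr ≤ ∫_{C_n(L)} e^{-r} dr, where C_n(L) + s + k denotes the translate {x + s + k : x ∈ C_n(L)}. -/
open Real MeasureTheory

/-- The `n`-iterate mid-third Cantor set based in `[0, L]`:
`C₀(L) = [0,L]` and `C_{n+1}(L) = (1/3)·C_n(L) ∪ (2L/3 + (1/3)·C_n(L))`. -/
def cantorIterate : ℕ → ℝ → Set ℝ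
  | 0, L => Set.Icc 0 L
  | n + 1, L =>
      (fun x => x / 3) '' cantorIterate n L ∪
        (fun x => 2 * L / 3 + x / 3) '' cantorIterate n L

/-!
Write `I(t) = ∫_{C ∩ [t, ∞)} e^{-x} dx` for `C = C_n(L)`. The self-similarity
`C_{n+1}(3ℓ) = C_n(ℓ) ∪ (2ℓ + C_n(ℓ))` gives `I_{n+1}(t) = I_n(t) + e^{-2ℓ} I_n(t - 2ℓ)`, and an
induction along this recursion shows `I(t) ≤ e^{-t} I(0)`: the measure `e^{-x} dx` on `C`,
normalised, has tails dominated by those of the exponential distribution. By the layer-cake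
formula its moments are dominated too, `∫_C x^j e^{-x} ≤ j! ∫_C e^{-x}`. Expanding `(x + a)^k`
binomially, with `a = s + k ≥ 0`, then bounds the shifted integral by
`e^{-a} ∑_{j ≤ k} a^j / j! · ∫_C e^{-x} ≤ ∫_C e^{-x}`.
-/

open Set
open scoped ENNReal Nat

lemma isCompact_cantorIterate (n : ℕ) (L : ℝ) : IsCompact (cantorIterate n L) := by
  induction n with
  | zero => exact isCompact_Icc
  | succ n ih => exact (ih.image (by fun_prop)).union (ih.image (by fun_prop))

lemma cantorIterate_subset_Icc (n : ℕ) {L : ℝ} (hL : 0 ≤ L) : cantorIterate n L ⊆ Icc 0 L := by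
  induction n with
  | zero => exact subset_rfl
  | succ n ih =>
    rintro _ (⟨x, hx, rfl⟩ | ⟨x, hx, rfl⟩) <;>
    · obtain ⟨hx0, hxL⟩ := ih hx
      constructor <;> linarith

lemma cantorIterate_div_three (n : ℕ) (L : ℝ) :
    cantorIterate n (L / 3) = (· / 3) '' cantorIterate n L := by
  induction n with
  | zero =>
    ext x
    constructor
    · rintro ⟨hx0, hxL⟩
      exact ⟨3 * x, ⟨by linarith, by linarith⟩, by ring⟩
    · rintro ⟨y, ⟨hy0, hyL⟩, rfl⟩
      exact ⟨by linarith, by linarith⟩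
  | succ n ih =>
    simp only [cantorIterate, ih, image_union, image_image]
    congr 1
    exact image_congr fun x _ => by ring

lemma cantorIterate_succ_three_mul (n : ℕ) (ℓ : ℝ) :
    cantorIterate (n + 1) (3 * ℓ) = cantorIterate n ℓ ∪ (2 * ℓ + ·) '' cantorIterate n ℓ := by
  have hℓ : cantorIterate n ℓ = (· / 3) '' cantorIterate n (3 * ℓ) := by
    rw [← cantorIterate_div_three, mul_div_cancel_left₀ _ three_ne_zero]
  rw [hℓ, image_image, cantorIterate]
  congr 1
  exact image_congr fun x _ => by ring

noncomputable def expTail (A : Set ℝ) (t : ℝ) : ℝ := ∫ x in A ∩ Ici t, exp (-x)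

lemma integrableOn_exp_neg_inter_Ici (A : Set ℝ) (t : ℝ) :
    IntegrableOn (fun x => exp (-x)) (A ∩ Ici t) := by
  refine IntegrableOn.mono_set ?_ inter_subset_right
  rw [integrableOn_Ici_iff_integrableOn_Ioi]
  simpa using exp_neg_integrableOn_Ioi t one_pos

lemma expTail_nonneg (A : Set ℝ) (t : ℝ) : 0 ≤ expTail A t :=
  integral_nonneg fun _ => (exp_pos _).le

lemma expTail_of_subset_Ici {A : Set ℝ} {t : ℝ} (hA : A ⊆ Ici t) :
    expTail A t = ∫ x in A, exp (-x) := by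
  rw [expTail, inter_eq_left.2 hA]

lemma expTail_eq_zero_of_subset_Iic {A : Set ℝ} {L t : ℝ} (hA : A ⊆ Iic L) (ht : L ≤ t) :
    expTail A t = 0 := by
  have hsub : A ∩ Ici t ⊆ Icc t L := fun x hx => ⟨hx.2, hA hx.1⟩
  have hnull : volume (A ∩ Ici t) = 0 := by
    refine measure_mono_null hsub ?_
    rw [Real.volume_Icc, ENNReal.ofReal_eq_zero]
    linarith
  rw [expTail, Measure.restrict_eq_zero.2 hnull, integral_zero_measure]

lemma expTail_union {A B : Set ℝ} (hAB : Disjoint A B) (hB : MeasurableSet B) (t : ℝ) :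
    expTail (A ∪ B) t = expTail A t + expTail B t := by
  rw [expTail, union_inter_distrib_right]
  exact setIntegral_union (hAB.mono inter_subset_left inter_subset_left)
    (hB.inter measurableSet_Ici) (integrableOn_exp_neg_inter_Ici A t)
    (integrableOn_exp_neg_inter_Ici B t)

lemma expTail_image_const_add (A : Set ℝ) (c t : ℝ) :
    expTail ((c + ·) '' A) t = exp (-c) * expTail A (t - c) := by
  have hset : (c + ·) '' A ∩ Ici t = (c + ·) '' (A ∩ Ici (t - c)) := by
    rw [image_inter (add_right_injective c), image_const_add_Ici, add_sub_cancel]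
  rw [expTail, hset, (measurePreserving_add_left volume c).setIntegral_image_emb
    (measurableEmbedding_addLeft c), expTail, ← integral_const_mul]
  simp only [neg_add, exp_add]

lemma expTail_Icc {L t : ℝ} (ht : 0 ≤ t) (htL : t ≤ L) :
    expTail (Icc 0 L) t = exp (-t) - exp (-L) := by
  have hset : Icc 0 L ∩ Ici t = Icc t L := by
    ext x
    simp only [mem_inter_iff, mem_Icc, mem_Ici]
    exact ⟨fun ⟨⟨_, hxL⟩, htx⟩ => ⟨htx, hxL⟩, fun ⟨htx, hxL⟩ => ⟨⟨ht.trans htx, hxL⟩, htx⟩⟩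
  rw [expTail, hset, integral_Icc_eq_integral_Ioc,
    ← intervalIntegral.integral_of_le htL, intervalIntegral.integral_comp_neg fun x => exp x,
    integral_exp]

lemma expTail_cantorIterate_succ (n : ℕ) {ℓ : ℝ} (hℓ : 0 < ℓ) (t : ℝ) :
    expTail (cantorIterate (n + 1) (3 * ℓ)) t =
      expTail (cantorIterate n ℓ) t + exp (-(2 * ℓ)) * expTail (cantorIterate n ℓ) (t - 2 * ℓ) := by
  have hC := cantorIterate_subset_Icc n hℓ.le
  have hdisj : Disjoint (cantorIterate n ℓ) ((2 * ℓ + ·) '' cantorIterate n ℓ) := by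
    rw [disjoint_left]
    rintro x hx ⟨y, hy, rfl⟩
    linarith [(hC hx).2, (hC hy).1]
  rw [cantorIterate_succ_three_mul, expTail_union hdisj
    ((isCompact_cantorIterate n ℓ).image (by fun_prop)).measurableSet, expTail_image_const_add]

/-- A strengthening of `F t ≤ exp (-t) * F 0` that survives the Cantor recursion: with
`B = exp (-2ℓ)` the recursion turns `1 - B` into `1 - B³ = (1 - B) (1 + B + B²)`, and what is
left over in each case is the nonnegative slack `B² (1 - exp (-t)) F 0`. -/
def ExpTailBound (F : ℝ → ℝ) (L : ℝ) : Prop :=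
  ∀ t ∈ Icc 0 L, (1 - exp (-(2 * L))) * F t ≤ (exp (-t) - exp (-(2 * L))) * F 0

lemma ExpTailBound.le_exp_neg_mul {F : ℝ → ℝ} {L : ℝ} (hFL : ExpTailBound F L) (hL : 0 < L)
    (hF0 : ∀ t, 0 ≤ F t) (hF_right : ∀ t, L ≤ t → F t = 0) {t : ℝ} (ht : 0 ≤ t) :
    F t ≤ exp (-t) * F 0 := by
  rcases le_or_gt t L with htL | htL
  · have hB : exp (-(2 * L)) < 1 := exp_lt_one_iff.2 (by linarith)
    have hx : exp (-t) ≤ 1 := exp_le_one_iff.2 (by linarith)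
    have h := hFL t ⟨ht, htL⟩
    refine le_of_mul_le_mul_left ?_ (sub_pos.2 hB)
    nlinarith [mul_nonneg (mul_nonneg (exp_pos (-(2 * L))).le (sub_nonneg.2 hx)) (hF0 0)]
  · rw [hF_right t htL.le]
    exact mul_nonneg (exp_pos _).le (hF0 0)

lemma ExpTailBound.three_mul {F : ℝ → ℝ} {ℓ : ℝ} (hFℓ : ExpTailBound F ℓ) (hℓ : 0 < ℓ)
    (hF0 : ∀ t, 0 ≤ F t) (hF_left : ∀ t ≤ 0, F t = F 0) (hF_right : ∀ t, ℓ ≤ t → F t = 0) :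
    ExpTailBound (fun t => F t + exp (-(2 * ℓ)) * F (t - 2 * ℓ)) (3 * ℓ) := by
  rintro t ⟨ht0, ht3⟩
  set B := exp (-(2 * ℓ)) with hB
  have hB3 : exp (-(2 * (3 * ℓ))) = B ^ 3 := by rw [hB, ← exp_nat_mul]; ring_nf
  have hB0 : 0 < B := exp_pos _
  have hB1 : B < 1 := exp_lt_one_iff.2 (by linarith)
  have hx : exp (-t) ≤ 1 := exp_le_one_iff.2 (by linarith)
  have hF00 := hF0 0
  simp only [hB3]
  rw [hF_left (0 - 2 * ℓ) (by linarith)]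
  rcases le_or_gt t ℓ with h1 | h1
  · rw [hF_left (t - 2 * ℓ) (by linarith)]
    have h := mul_le_mul_of_nonneg_left (hFℓ t ⟨ht0, h1⟩) (by positivity : 0 ≤ 1 + B + B ^ 2)
    nlinarith [mul_nonneg (mul_nonneg (sq_nonneg B) (sub_nonneg.2 hx)) hF00]
  rcases le_or_gt t (2 * ℓ) with h2 | h2
  · rw [hF_right t h1.le, hF_left (t - 2 * ℓ) (by linarith)]
    have hBx : B ≤ exp (-t) := exp_le_exp.2 (by linarith)
    nlinarith [mul_nonneg (mul_nonneg (sub_nonneg.2 hBx) (by positivity : 0 ≤ 1 + B)) hF00,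
      mul_nonneg (mul_nonneg (sq_nonneg B) (sub_nonneg.2 hB1.le)) hF00]
  · rw [hF_right t (by linarith)]
    have hxy : exp (-t) = exp (-(t - 2 * ℓ)) * B := by rw [hB, ← exp_add]; ring_nf
    have h := mul_le_mul_of_nonneg_left (hFℓ (t - 2 * ℓ) ⟨by linarith, by linarith⟩)
      (by positivity : 0 ≤ B * (1 + B + B ^ 2))
    rw [hxy] at hx ⊢
    nlinarith [mul_nonneg (mul_nonneg (sq_nonneg B) (sub_nonneg.2 hx)) hF00]

lemma expTailBound_cantorIterate (n : ℕ) {L : ℝ} (hL : 0 < L) :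
    ExpTailBound (expTail (cantorIterate n L)) L := by
  induction n generalizing L with
  | zero =>
    rintro t ⟨ht0, htL⟩
    have hu : exp (-(2 * L)) = exp (-L) ^ 2 := by rw [← exp_nat_mul]; ring_nf
    have hu1 : exp (-L) < 1 := exp_lt_one_iff.2 (by linarith)
    have hx : exp (-t) ≤ 1 := exp_le_one_iff.2 (by linarith)
    simp only [cantorIterate]
    rw [expTail_Icc ht0 htL, expTail_Icc le_rfl hL.le, hu, neg_zero, exp_zero]
    nlinarith [mul_nonneg (mul_nonneg (exp_pos (-L)).le (sub_nonneg.2 hx)) (sub_nonneg.2 hu1.le)]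
  | succ n ih =>
    obtain ⟨ℓ, rfl⟩ : ∃ ℓ, L = 3 * ℓ := ⟨L / 3, by ring⟩
    have hℓ : 0 < ℓ := by linarith
    have hC := cantorIterate_subset_Icc n hℓ.le
    rw [funext (expTail_cantorIterate_succ n hℓ)]
    exact (ih hℓ).three_mul hℓ (expTail_nonneg _)
      (fun t ht => by rw [expTail_of_subset_Ici fun x hx => ht.trans (hC hx).1,
        expTail_of_subset_Ici fun x hx => (hC hx).1])
      (fun t ht => expTail_eq_zero_of_subset_Iic (hC.trans Icc_subset_Iic_self) ht)

lemma expTail_cantorIterate_le (n : ℕ) {L : ℝ} (hL : 0 < L) {t : ℝ} (ht : 0 ≤ t) :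
    expTail (cantorIterate n L) t ≤ exp (-t) * ∫ x in cantorIterate n L, exp (-x) := by
  have hC := cantorIterate_subset_Icc n hL.le
  rw [← expTail_of_subset_Ici fun x hx => (hC hx).1]
  exact (expTailBound_cantorIterate n hL).le_exp_neg_mul hL (expTail_nonneg _)
    (fun t ht => expTail_eq_zero_of_subset_Iic (hC.trans Icc_subset_Iic_self) ht) ht

lemma lintegral_pow_le_factorial_mul_of_meas_le {α : Type*} [MeasurableSpace α] {μ : Measure α}
    {f : α → ℝ} (hf_nn : 0 ≤ᵐ[μ] f) (hf : AEMeasurable f μ) {c : ℝ≥0∞}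
    (htail : ∀ t, 0 < t → μ {a | t ≤ f a} ≤ c * ENNReal.ofReal (exp (-t))) {j : ℕ} (hj : 0 < j) :
    ∫⁻ a, ENNReal.ofReal (f a ^ j) ∂μ ≤ j ! * c := by
  have hjR : (0 : ℝ) < j := by exact_mod_cast hj
  have hGamma : ∫⁻ t in Ioi 0, ENNReal.ofReal (exp (-t) * t ^ ((j : ℝ) - 1)) =
      ENNReal.ofReal (Gamma j) := by
    rw [Gamma_eq_integral hjR, ofReal_integral_eq_lintegral_ofReal (GammaIntegral_convergent hjR)]
    filter_upwards [ae_restrict_mem measurableSet_Ioi] with t ht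
    exact mul_nonneg (exp_pos _).le (rpow_nonneg (mem_Ioi.1 ht).le _)
  have hfact : ENNReal.ofReal j * ENNReal.ofReal (Gamma j) = j ! := by
    rw [← ENNReal.ofReal_mul hjR.le, ← Gamma_add_one hjR.ne', Gamma_nat_eq_factorial,
      ENNReal.ofReal_natCast]
  simp_rw [← rpow_natCast]
  rw [lintegral_rpow_eq_lintegral_meas_le_mul μ hf_nn hf hjR]
  calc ENNReal.ofReal j * ∫⁻ t in Ioi (0 : ℝ), μ {a | t ≤ f a} * ENNReal.ofReal (t ^ ((j : ℝ) - 1))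
      ≤ ENNReal.ofReal j * ∫⁻ t in Ioi 0, c * ENNReal.ofReal (exp (-t) * t ^ ((j : ℝ) - 1)) := by
        refine mul_le_mul_right (setLIntegral_mono' measurableSet_Ioi fun t ht => ?_) _
        rw [ENNReal.ofReal_mul (exp_pos _).le, ← mul_assoc]
        exact mul_le_mul_left (htail t ht) _
    _ = j ! * c := by
        rw [lintegral_const_mul _ (by fun_prop), hGamma, mul_left_comm, hfact, mul_comm]

lemma setIntegral_pow_mul_exp_neg_le {A : Set ℝ} (hA : IsCompact A) (hA0 : A ⊆ Ici 0)
    (htail : ∀ t, 0 ≤ t → expTail A t ≤ exp (-t) * ∫ x in A, exp (-x)) (j : ℕ) :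
    ∫ x in A, x ^ j * exp (-x) ≤ j ! * ∫ x in A, exp (-x) := by
  rcases j.eq_zero_or_pos with rfl | hj
  · simp
  have hAm := hA.measurableSet
  have hI : 0 ≤ ∫ x in A, exp (-x) := integral_nonneg fun _ => (exp_pos _).le
  set μ := (volume.restrict A).withDensity fun x => ENNReal.ofReal (exp (-x))
  have hmem : ∀ᵐ x ∂μ, x ∈ A := (withDensity_absolutelyContinuous _ _).ae_le (ae_restrict_mem hAm)
  have hf_nn : 0 ≤ᵐ[μ] fun x => x := hmem.mono fun x hx => hA0 hx
  have hmoment : ∫⁻ x, ENNReal.ofReal (x ^ j) ∂μ = ENNReal.ofReal (∫ x in A, x ^ j * exp (-x)) := by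
    rw [lintegral_withDensity_eq_lintegral_mul₀ (by fun_prop) (by fun_prop),
      ofReal_integral_eq_lintegral_ofReal
        ((Continuous.continuousOn (by fun_prop)).integrableOn_compact hA) ?_]
    · refine lintegral_congr_ae ?_
      filter_upwards [ae_restrict_mem hAm] with x hx
      rw [Pi.mul_apply, ← ENNReal.ofReal_mul (exp_pos _).le, mul_comm]
    · filter_upwards [ae_restrict_mem hAm] with x hx
      exact mul_nonneg (pow_nonneg (hA0 hx) _) (exp_pos _).le
  have hμ_tail : ∀ t, 0 < t →
      μ {x | t ≤ x} ≤ ENNReal.ofReal (∫ x in A, exp (-x)) * ENNReal.ofReal (exp (-t)) := by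
    intro t ht
    have hμ : μ (Ici t) = ENNReal.ofReal (expTail A t) := by
      rw [withDensity_apply _ measurableSet_Ici, Measure.restrict_restrict measurableSet_Ici,
        inter_comm, expTail, ofReal_integral_eq_lintegral_ofReal
          (integrableOn_exp_neg_inter_Ici A t) (ae_of_all _ fun _ => (exp_pos _).le)]
    rw [Ici_def, hμ, ← ENNReal.ofReal_mul hI, mul_comm]
    exact ENNReal.ofReal_le_ofReal (htail t ht.le)
  have h := lintegral_pow_le_factorial_mul_of_meas_le hf_nn aemeasurable_id' hμ_tail hj
  rw [hmoment, ← ENNReal.ofReal_natCast, ← ENNReal.ofReal_mul (by positivity)] at h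
  exact (ENNReal.ofReal_le_ofReal_iff (by positivity)).1 h

lemma add_pow_div_factorial (x y : ℝ) (n : ℕ) :
    (x + y) ^ n / n ! = ∑ m ∈ Finset.range (n + 1), x ^ m * y ^ (n - m) / (m ! * (n - m)!) := by
  rw [add_pow, Finset.sum_div]
  refine Finset.sum_congr rfl fun m hm => ?_
  rw [Nat.cast_choose ℝ (Nat.lt_succ_iff.1 (Finset.mem_range.1 hm))]
  field_simp

lemma setIntegral_add_pow_div_factorial_mul_exp_neg_le {A : Set ℝ} (hA : IsCompact A)
    (hA0 : A ⊆ Ici 0) (htail : ∀ t, 0 ≤ t → expTail A t ≤ exp (-t) * ∫ x in A, exp (-x))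
    {a : ℝ} (ha : 0 ≤ a) (k : ℕ) :
    ∫ x in A, (x + a) ^ k / k ! * exp (-(x + a)) ≤ ∫ x in A, exp (-x) := by
  set c : ℕ → ℝ := fun j => exp (-a) * a ^ (k - j) / (j ! * (k - j)!)
  have hexpand : ∀ x, (x + a) ^ k / k ! * exp (-(x + a)) =
      ∑ j ∈ Finset.range (k + 1), c j * (x ^ j * exp (-x)) := by
    intro x
    rw [add_pow_div_factorial, Finset.sum_mul, neg_add, exp_add]
    exact Finset.sum_congr rfl fun j _ => by ring
  have hI : 0 ≤ ∫ x in A, exp (-x) := integral_nonneg fun _ => (exp_pos _).le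
  have hpartial : ∑ j ∈ Finset.range (k + 1), c j * j ! ≤ 1 := by
    calc ∑ j ∈ Finset.range (k + 1), c j * j !
        = exp (-a) * ∑ j ∈ Finset.range (k + 1), a ^ (k - j) / (k - j)! := by
          rw [Finset.mul_sum]
          refine Finset.sum_congr rfl fun j _ => ?_
          simp only [c]
          field_simp
      _ = exp (-a) * ∑ j ∈ Finset.range (k + 1), a ^ j / j ! := by
          rw [← Finset.sum_range_reflect (fun j => a ^ j / j !) (k + 1), Nat.add_sub_cancel]
      _ ≤ exp (-a) * exp a := by gcongr; exact sum_le_exp_of_nonneg ha _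
      _ = 1 := by rw [← exp_add, neg_add_cancel, exp_zero]
  simp_rw [hexpand]
  rw [integral_finsetSum _ fun j _ =>
    (Continuous.continuousOn (by fun_prop)).integrableOn_compact hA]
  calc ∑ j ∈ Finset.range (k + 1), ∫ x in A, c j * (x ^ j * exp (-x))
      ≤ ∑ j ∈ Finset.range (k + 1), c j * (j ! * ∫ x in A, exp (-x)) := by
        refine Finset.sum_le_sum fun j _ => ?_
        rw [integral_const_mul]
        exact mul_le_mul_of_nonneg_left (setIntegral_pow_mul_exp_neg_le hA hA0 htail j)
          (by positivity)
    _ = (∑ j ∈ Finset.range (k + 1), c j * j !) * ∫ x in A, exp (-x) := by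
        rw [Finset.sum_mul]
        exact Finset.sum_congr rfl fun j _ => by ring
    _ ≤ ∫ x in A, exp (-x) := mul_le_of_le_one_left hI hpartial

/-- For every `L > 0`, `s ≥ 0` and `k, n ∈ ℕ`, the integral of `f_k` over the
shifted Cantor iterate `C_n(L) + s + k` is at most the first eigenvalue
`λ₀(C_n(L)) = ∫_{C_n(L)} e^{-r} dr`. -/
theorem shifted_cantor_integral_le_lambda_zero
    (L : ℝ) (hL : 0 < L) (s : ℝ) (hs : 0 ≤ s) (k n : ℕ) :
    (∫ r in (fun x => x + s + k) '' cantorIterate n L,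
        r ^ k / (Nat.factorial k) * Real.exp (-r)) ≤
      ∫ r in cantorIterate n L, Real.exp (-r) := by
  have hshift : (fun x : ℝ => x + s + k) = (· + (s + k)) := funext fun x => add_assoc x s k
  rw [hshift, (measurePreserving_add_right volume (s + k)).setIntegral_image_emb
    (measurableEmbedding_addRight (s + k))]
  exact setIntegral_add_pow_div_factorial_mul_exp_neg_le (isCompact_cantorIterate n L)
    (fun x hx => (cantorIterate_subset_Icc n hL.le hx).1)
    (fun t ht => expTail_cantorIterate_le n hL ht) (by positivity) k
end

section
/- For every k ∈ ℕ and every Lebesgue-measurable set E ⊆ [0, ∞) of finite measure |E|: ∫_E (r^k/k!) e^{-r} dr ≤ 1 − e^{-|E|} = ∫_0^{|E|} e^{-r} dr. -/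
/-!
For `k = j + 1`, `f_k` is the convolution of `f_j` with `e^{-r}`:
`f_k(r) = ∫_0^r f_j(s) e^{-(r-s)} ds`. So `f_k` is a mixture, with the probability weights
`f_j(s) ds`, of the shifted exponential densities `e^{-(r-s)}` on `[s, ∞)`. Each of these is
decreasing on `[s, ∞)`, so by the bathtub principle its integral over `E ∩ [s, ∞)` is at most its
integral over `[s, s + |E|]`, which is `1 - e^{-|E|}`; averaging over `s` (Tonelli) gives the bound.
-/

open Real MeasureTheory Set ProbabilityTheory

theorem lintegral_le_lintegral_Icc_of_antitone {f : ℝ → ENNReal} (hf : Antitone f) {c : ℝ}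
    {A : Set ℝ} (hA : MeasurableSet A) (hAc : A ⊆ Ici c) (hAfin : volume A ≠ ⊤) :
    ∫⁻ r in A, f r ≤ ∫⁻ r in Icc c (c + (volume A).toReal), f r := by
  set t := c + (volume A).toReal
  set I := Icc c t
  have hI : MeasurableSet I := measurableSet_Icc
  have hvol : volume (A \ I) = volume (I \ A) := by
    refine measure_sdiff_symm hA.nullMeasurableSet hI.nullMeasurableSet ?_
      (measure_ne_top_of_subset inter_subset_left hAfin)
    rw [Real.volume_Icc, add_sub_cancel_left, ENNReal.ofReal_toReal hAfin]
  -- `f t` separates the values of `f` on `A \ I` from those on `I \ A`, which have equal measure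
  have h_out : ∫⁻ r in A \ I, f r ≤ ∫⁻ _ in A \ I, f t :=
    setLIntegral_mono measurable_const fun r hr =>
      hf (le_of_not_ge fun h => hr.2 ⟨hAc hr.1, h⟩)
  have h_in : ∫⁻ _ in I \ A, f t ≤ ∫⁻ r in I \ A, f r :=
    setLIntegral_mono hf.measurable fun r hr => hf hr.1.2
  calc ∫⁻ r in A, f r = (∫⁻ r in A ∩ I, f r) + ∫⁻ r in A \ I, f r :=
        (lintegral_inter_add_sdiff f A hI).symm
    _ ≤ (∫⁻ r in I ∩ A, f r) + ∫⁻ r in I \ A, f r := by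
        rw [inter_comm]
        refine add_le_add_right (h_out.trans (le_of_eq_of_le ?_ h_in)) _
        rw [setLIntegral_const, setLIntegral_const, hvol]
    _ = ∫⁻ r in I, f r := lintegral_inter_add_sdiff f I hA

theorem integral_exp_neg (m : ℝ) : ∫ r in (0 : ℝ)..m, exp (-r) = 1 - exp (-m) := by
  rw [intervalIntegral.integral_comp_neg (fun r => exp r), integral_exp, neg_zero, exp_zero]

theorem lintegral_exp_neg_sub_le {c m : ℝ} (hm : 0 ≤ m) {A : Set ℝ} (hA : MeasurableSet A)
    (hAc : A ⊆ Ici c) (hAm : volume A ≤ ENNReal.ofReal m) :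
    ∫⁻ r in A, ENNReal.ofReal (exp (-(r - c))) ≤ ENNReal.ofReal (1 - exp (-m)) := by
  have hAfin : volume A ≠ ⊤ := ne_top_of_le_ne_top ENNReal.ofReal_ne_top hAm
  have hantitone : Antitone fun r => ENNReal.ofReal (exp (-(r - c))) := fun r r' h =>
    ENNReal.ofReal_le_ofReal (exp_le_exp.mpr (by linarith))
  set a := (volume A).toReal
  have ha : 0 ≤ a := ENNReal.toReal_nonneg
  calc ∫⁻ r in A, ENNReal.ofReal (exp (-(r - c)))
      ≤ ∫⁻ r in Icc c (c + a), ENNReal.ofReal (exp (-(r - c))) :=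
        lintegral_le_lintegral_Icc_of_antitone hantitone hA hAc hAfin
    _ = ENNReal.ofReal (1 - exp (-a)) := by
        rw [← ofReal_integral_eq_lintegral_ofReal, integral_Icc_eq_integral_Ioc,
          ← intervalIntegral.integral_of_le (by linarith),
          intervalIntegral.integral_comp_sub_right (fun r => exp (-r)), sub_self,
          add_sub_cancel_left, integral_exp_neg]
        · exact (by fun_prop : Continuous fun r => exp (-(r - c))).integrableOn_Icc
        · exact Filter.Eventually.of_forall fun r => (exp_pos _).le
    _ ≤ ENNReal.ofReal (1 - exp (-m)) :=
        ENNReal.ofReal_le_ofReal (by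
          have := ENNReal.toReal_le_of_le_ofReal hm hAm
          linarith [exp_le_exp.mpr (neg_le_neg this)])

noncomputable def fEigen (k : ℕ) (r : ℝ) : ℝ := r ^ k / k.factorial * exp (-r)

theorem fEigen_nonneg (k : ℕ) {r : ℝ} (hr : 0 ≤ r) : 0 ≤ fEigen k r := by
  unfold fEigen; positivity

@[fun_prop]
theorem continuous_fEigen (k : ℕ) : Continuous (fEigen k) := by
  unfold fEigen; fun_prop

theorem gammaPDF_natCast_add_one_one (j : ℕ) {s : ℝ} (hs : 0 ≤ s) :
    gammaPDF (j + 1) 1 s = ENNReal.ofReal (fEigen j s) := by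
  rw [gammaPDF_of_nonneg hs, fEigen, one_rpow, Gamma_nat_eq_factorial, add_sub_cancel_right,
    rpow_natCast, one_mul]
  ring_nf

theorem lintegral_Ici_fEigen (j : ℕ) : ∫⁻ s in Ici 0, ENNReal.ofReal (fEigen j s) = 1 := by
  have hsupp : (gammaPDF (j + 1) 1).support ⊆ Ici 0 := fun s hs =>
    not_lt.mp fun hneg => hs (gammaPDF_of_neg hneg)
  rw [← setLIntegral_congr_fun measurableSet_Ici fun s hs => gammaPDF_natCast_add_one_one j hs,
    setLIntegral_eq_of_support_subset hsupp, lintegral_gammaPDF_eq_one (by positivity) one_pos]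

theorem fEigen_succ_eq_integral (j : ℕ) (r : ℝ) :
    fEigen (j + 1) r = ∫ s in (0 : ℝ)..r, fEigen j s * exp (-(r - s)) := by
  have h : ∀ s, fEigen j s * exp (-(r - s)) = s ^ j * (exp (-r) / j.factorial) := fun s => by
    rw [fEigen, mul_assoc, ← exp_add, show -s + -(r - s) = -r by ring]
    ring
  simp_rw [h]
  rw [intervalIntegral.integral_mul_const, integral_pow, fEigen, Nat.factorial_succ]
  push_cast
  field_simp
  ring

theorem ofReal_fEigen_succ_eq_lintegral (j : ℕ) {r : ℝ} (hr : 0 ≤ r) :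
    ENNReal.ofReal (fEigen (j + 1) r) =
      ∫⁻ s in Icc 0 r, ENNReal.ofReal (fEigen j s * exp (-(r - s))) := by
  rw [fEigen_succ_eq_integral, intervalIntegral.integral_of_le hr, ← integral_Icc_eq_integral_Ioc,
    ofReal_integral_eq_lintegral_ofReal]
  · exact (by fun_prop : Continuous fun s => fEigen j s * exp (-(r - s))).integrableOn_Icc
  · filter_upwards [ae_restrict_mem measurableSet_Icc] with s hs
    exact mul_nonneg (fEigen_nonneg j hs.1) (exp_pos _).le

theorem lintegral_fEigen_le (k : ℕ) {m : ℝ} (hm : 0 ≤ m) {E : Set ℝ} (hE : MeasurableSet E)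
    (hE₀ : E ⊆ Ici 0) (hEm : volume E ≤ ENNReal.ofReal m) :
    ∫⁻ r in E, ENNReal.ofReal (fEigen k r) ≤ ENNReal.ofReal (1 - exp (-m)) := by
  cases k with
  | zero => simpa [fEigen] using lintegral_exp_neg_sub_le hm hE hE₀ hEm
  | succ j =>
    set K : ℝ → ℝ → ENNReal := fun r s =>
      if s ≤ r then ENNReal.ofReal (fEigen j s * exp (-(r - s))) else 0
    have hK : Measurable (Function.uncurry K) :=
      Measurable.ite (measurableSet_le measurable_snd measurable_fst)
        (by fun_prop) measurable_const
    have hK_Iic (r s : ℝ) : K r s =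
        (Iic r).indicator (fun s => ENNReal.ofReal (fEigen j s * exp (-(r - s)))) s := by
      simp only [K, indicator_apply, mem_Iic]
    have hK_Ici (r s : ℝ) : K r s =
        (Ici s).indicator (fun r => ENNReal.ofReal (fEigen j s * exp (-(r - s)))) r := by
      simp only [K, indicator_apply, mem_Ici]
    have h_inner (s : ℝ) (hs : s ∈ Ici 0) :
        ∫⁻ r in E, K r s ≤ ENNReal.ofReal (fEigen j s) * ENNReal.ofReal (1 - exp (-m)) := by
      simp_rw [hK_Ici _ s]
      rw [lintegral_indicator measurableSet_Ici, Measure.restrict_restrict measurableSet_Ici]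
      simp_rw [ENNReal.ofReal_mul (fEigen_nonneg j hs)]
      rw [lintegral_const_mul _ (by fun_prop)]
      gcongr
      exact lintegral_exp_neg_sub_le hm (measurableSet_Ici.inter hE) inter_subset_left
        ((measure_mono inter_subset_right).trans hEm)
    calc ∫⁻ r in E, ENNReal.ofReal (fEigen (j + 1) r)
        = ∫⁻ r in E, ∫⁻ s in Ici 0, K r s := by
          refine setLIntegral_congr_fun hE fun r hr => ?_
          simp_rw [hK_Iic r]
          rw [ofReal_fEigen_succ_eq_lintegral j (hE₀ hr), lintegral_indicator measurableSet_Iic,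
            Measure.restrict_restrict measurableSet_Iic, Iic_inter_Ici]
      _ = ∫⁻ s in Ici 0, ∫⁻ r in E, K r s := lintegral_lintegral_swap hK.aemeasurable
      _ ≤ ∫⁻ s in Ici 0, ENNReal.ofReal (fEigen j s) * ENNReal.ofReal (1 - exp (-m)) :=
          setLIntegral_mono' measurableSet_Ici h_inner
      _ = ENNReal.ofReal (1 - exp (-m)) := by
          rw [lintegral_mul_const _ (by fun_prop), lintegral_Ici_fEigen, one_mul]

/-- For every `k ∈ ℕ` and every measurable `E ⊆ [0,∞)` of finite measure:
`∫_E (r^k/k!) e^{-r} dr ≤ 1 − e^{-|E|} = ∫_0^{|E|} e^{-r} dr`. -/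
theorem integral_fEigen_le_disk (k : ℕ) (E : Set ℝ) (hE : MeasurableSet E)
    (hE₀ : E ⊆ Set.Ici (0 : ℝ)) (hEfin : volume E < ⊤) :
    (∫ r in E, r ^ k / (Nat.factorial k) * Real.exp (-r)) ≤
        1 - Real.exp (-(volume E).toReal) ∧
      (1 : ℝ) - Real.exp (-(volume E).toReal) =
        ∫ r in (0 : ℝ)..(volume E).toReal, Real.exp (-r) := by
  have hm : 0 ≤ (volume E).toReal := ENNReal.toReal_nonneg
  have hEm : volume E ≤ ENNReal.ofReal (volume E).toReal := (ENNReal.ofReal_toReal hEfin.ne).ge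
  have hbound : 0 ≤ 1 - exp (-(volume E).toReal) :=
    sub_nonneg.mpr (exp_le_one_iff.mpr (neg_nonpos.mpr hm))
  have hf_nonneg : 0 ≤ᵐ[volume.restrict E] fEigen k :=
    (ae_restrict_iff' hE).mpr (Filter.Eventually.of_forall fun r hr => fEigen_nonneg k (hE₀ hr))
  refine ⟨?_, (integral_exp_neg _).symm⟩
  change ∫ r in E, fEigen k r ≤ _
  rw [integral_eq_lintegral_of_nonneg_ae hf_nonneg (continuous_fEigen k).aestronglyMeasurable]
  exact ENNReal.toReal_le_of_le_ofReal hbound (lintegral_fEigen_le k hm hE hE₀ hEm)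
end
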